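/- For every w ∈ [0,θ·b] one has 0 ≤ γ(w)_i ≤ b_i for all i and θ·γ(w) = w; each coordinate function w ↦ γ(w)_i is nondecreasing on [0,θ·b] and Lipschitz continuous with Lipschitz constant 1/θ_i; in particular γ is continuous on [0,θ·b]. -/

import Mathlib

/-- `B j = b̂_j = Σ_{classes > j} θ_i b_i` (classes are 1-based: class `j` is Fin-index `j-1`). -/
noncomputable def bhat {I : ℕ} (b θ : Fin I → ℝ) (j : ℕ) : ℝ :=
  ∑ i ∈ Finset.univ.filter (fun i : Fin I => j ≤ i.val), θ i * b i

/-!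
On `[0, θ·b]` the curve `γ` has the closed form `γ(w)_i = min (b_i) (max 0 ((w - b̂_i) / θ_i))`
(`fillCurve`; Fin-index `i` is class `i + 1`, hence `bhat b θ (i + 1)` there): as `w` decreases
from `θ·b` the classes are emptied one after another, the lowest class first, coordinate `i`
moving linearly through `[0, b_i]` while `w` runs through `[b̂_i, b̂_{i-1}]`. A clamped affine
function of slope `1/θ_i` is monotone and `1/θ_i`-Lipschitz, and
`θ_i γ(w)_i = min w b̂_{i-1} - min w b̂_i` makes `θ·γ(w)` telescope to `w`.
-/

open Finset

section bhat

variable {I : ℕ} {b θ : Fin I → ℝ}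

lemma bhat_zero : bhat b θ 0 = ∑ k, θ k * b k := by
  simp [bhat]

lemma bhat_eq_zero_of_le {j : ℕ} (hj : I ≤ j) : bhat b θ j = 0 :=
  sum_eq_zero fun i hi => absurd (mem_filter.mp hi).2 (by omega)

lemma bhat_eq_add_bhat_succ (i : Fin I) :
    bhat b θ i = θ i * b i + bhat b θ (i + 1) := by
  have hfilter : univ.filter (fun k : Fin I => (i : ℕ) ≤ k) =
      insert i (univ.filter fun k : Fin I => (i : ℕ) + 1 ≤ k) := by
    ext k
    simp only [mem_filter, mem_univ, true_and, mem_insert, Fin.ext_iff]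
    omega
  rw [bhat, hfilter, sum_insert (by simp), bhat]

lemma bhat_antitone (hb : ∀ i, 0 ≤ b i) (hθ : ∀ i, 0 ≤ θ i) : Antitone (bhat b θ) :=
  fun _ _ hjk => sum_le_sum_of_subset_of_nonneg
    (fun i hi => by simp only [mem_filter, mem_univ, true_and] at hi ⊢; omega)
    (fun i _ _ => mul_nonneg (hθ i) (hb i))

lemma exists_bhat_le_lt_bhat_pred {w : ℝ} (hw₀ : 0 ≤ w) (hw : w < ∑ k, θ k * b k) :
    ∃ j, 1 ≤ j ∧ j ≤ I ∧ bhat b θ j ≤ w ∧ w < bhat b θ (j - 1) := by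
  have hex : ∃ j, bhat b θ j ≤ w := ⟨I, by rwa [bhat_eq_zero_of_le le_rfl]⟩
  have hj₀ : Nat.find hex ≠ 0 := fun h => by
    have := Nat.find_spec hex
    rw [h, bhat_zero] at this
    linarith
  refine ⟨Nat.find hex, Nat.one_le_iff_ne_zero.mpr hj₀,
    Nat.find_le (by rwa [bhat_eq_zero_of_le le_rfl]), Nat.find_spec hex,
    lt_of_not_ge (Nat.find_min hex (by omega))⟩

end bhat

lemma abs_min_max_sub_min_max_le (c d x y : ℝ) :
    |min c (max d x) - min c (max d y)| ≤ |x - y| :=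
  calc |min c (max d x) - min c (max d y)|
      ≤ max |c - c| |max d x - max d y| := abs_min_sub_min_le_max _ _ _ _
    _ = |max x d - max y d| := by simp [max_comm]
    _ ≤ |x - y| := abs_max_sub_max_le_abs _ _ _

noncomputable def fillCurve {I : ℕ} (b θ : Fin I → ℝ) (w : ℝ) (i : Fin I) : ℝ :=
  min (b i) (max 0 ((w - bhat b θ (i + 1)) / θ i))

section fillCurve

variable {I : ℕ} {b θ : Fin I → ℝ} {w : ℝ} {i : Fin I}

lemma fillCurve_apply_of_le_bhat_succ (hb : 0 ≤ b i) (hθ : 0 < θ i)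
    (hw : w ≤ bhat b θ (i + 1)) : fillCurve b θ w i = 0 := by
  have : (w - bhat b θ (i + 1)) / θ i ≤ 0 := div_nonpos_of_nonpos_of_nonneg (by linarith) hθ.le
  rw [fillCurve, max_eq_left this, min_eq_right hb]

lemma fillCurve_apply_of_bhat_le (hb : 0 ≤ b i) (hθ : 0 < θ i) (hw : bhat b θ i ≤ w) :
    fillCurve b θ w i = b i := by
  have : b i ≤ (w - bhat b θ (i + 1)) / θ i := by
    rw [le_div_iff₀ hθ]
    linarith [bhat_eq_add_bhat_succ (b := b) (θ := θ) i]
  rw [fillCurve, max_eq_right (hb.trans this), min_eq_left this]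

lemma fillCurve_apply_of_mem_Icc (hθ : 0 < θ i)
    (hw : w ∈ Set.Icc (bhat b θ (i + 1)) (bhat b θ i)) :
    fillCurve b θ w i = (w - bhat b θ (i + 1)) / θ i := by
  have hle : (w - bhat b θ (i + 1)) / θ i ≤ b i := by
    rw [div_le_iff₀ hθ]
    linarith [hw.2, bhat_eq_add_bhat_succ (b := b) (θ := θ) i]
  rw [fillCurve, max_eq_right (div_nonneg (by linarith [hw.1]) hθ.le), min_eq_right hle]

lemma fillCurve_apply_mem_Icc (hb : 0 ≤ b i) : fillCurve b θ w i ∈ Set.Icc 0 (b i) :=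
  ⟨le_min hb (le_max_left _ _), min_le_left _ _⟩

lemma monotone_fillCurve_apply (hθ : 0 < θ i) : Monotone fun w => fillCurve b θ w i :=
  fun _ _ huv => min_le_min le_rfl <| max_le_max le_rfl <|
    div_le_div_of_nonneg_right (by linarith) hθ.le

lemma abs_fillCurve_apply_sub_le (hθ : 0 < θ i) (u v : ℝ) :
    |fillCurve b θ u i - fillCurve b θ v i| ≤ 1 / θ i * |u - v| :=
  calc |fillCurve b θ u i - fillCurve b θ v i|
      ≤ |(u - bhat b θ (i + 1)) / θ i - (v - bhat b θ (i + 1)) / θ i| :=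
        abs_min_max_sub_min_max_le _ _ _ _
    _ = 1 / θ i * |u - v| := by
        rw [div_sub_div_same, sub_sub_sub_cancel_right, abs_div, abs_of_pos hθ,
          one_div_mul_eq_div]

lemma continuous_fillCurve : Continuous (fillCurve b θ) :=
  continuous_pi fun i => by unfold fillCurve; fun_prop

lemma theta_mul_fillCurve_apply (hb : ∀ i, 0 ≤ b i) (hθ : ∀ i, 0 < θ i) (w : ℝ) (i : Fin I) :
    θ i * fillCurve b θ w i = min w (bhat b θ i) - min w (bhat b θ (i + 1)) := by
  have hsucc := bhat_eq_add_bhat_succ (b := b) (θ := θ) i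
  have hθb := mul_nonneg (hθ i).le (hb i)
  rcases le_total w (bhat b θ (i + 1)) with hw | hw
  · rw [fillCurve_apply_of_le_bhat_succ (hb i) (hθ i) hw, min_eq_left hw,
      min_eq_left (by linarith)]
    ring
  rcases le_total w (bhat b θ i) with hw' | hw'
  · rw [fillCurve_apply_of_mem_Icc (hθ i) ⟨hw, hw'⟩, min_eq_left hw', min_eq_right hw,
      mul_div_cancel₀ _ (hθ i).ne']
  · rw [fillCurve_apply_of_bhat_le (hb i) (hθ i) hw', min_eq_right hw', min_eq_right hw]
    linarith

lemma sum_theta_mul_fillCurve (hb : ∀ i, 0 ≤ b i) (hθ : ∀ i, 0 < θ i)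
    (hw : w ∈ Set.Icc 0 (∑ k, θ k * b k)) : ∑ i, θ i * fillCurve b θ w i = w :=
  calc ∑ i, θ i * fillCurve b θ w i
      = ∑ n ∈ range I, (min w (bhat b θ n) - min w (bhat b θ (n + 1))) := by
        simp only [theta_mul_fillCurve_apply hb hθ]
        exact Fin.sum_univ_eq_sum_range
          (fun n => min w (bhat b θ n) - min w (bhat b θ (n + 1))) _
    _ = w := by
        rw [sum_range_sub', bhat_zero, bhat_eq_zero_of_le le_rfl, min_eq_left hw.2,
          min_eq_right hw.1, sub_zero]

lemma fillCurve_sum_theta_mul (hb : ∀ i, 0 ≤ b i) (hθ : ∀ i, 0 < θ i) :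
    fillCurve b θ (∑ k, θ k * b k) = b :=
  funext fun i => fillCurve_apply_of_bhat_le (hb i) (hθ i) <|
    bhat_zero (b := b) (θ := θ) ▸ bhat_antitone hb (fun k => (hθ k).le) (Nat.zero_le _)

lemma fillCurve_eq_ite (hb : ∀ i, 0 ≤ b i) (hθ : ∀ i, 0 < θ i) {j : ℕ} (hj : 1 ≤ j)
    (hjw : bhat b θ j ≤ w) (hwj : w < bhat b θ (j - 1)) :
    fillCurve b θ w = fun i : Fin I =>
      if j ≤ i then b i else if (i : ℕ) = j - 1 then (w - bhat b θ j) / θ i else 0 := by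
  have hanti := bhat_antitone hb fun k => (hθ k).le
  funext i
  split_ifs with hji hij
  · exact fillCurve_apply_of_bhat_le (hb i) (hθ i) ((hanti hji).trans hjw)
  · have hsucc : (i : ℕ) + 1 = j := by omega
    rw [fillCurve_apply_of_mem_Icc (hθ i) ⟨hsucc ▸ hjw, hij ▸ hwj.le⟩, hsucc]
  · exact fillCurve_apply_of_le_bhat_succ (hb i) (hθ i)
      (hwj.le.trans (hanti (show (i : ℕ) + 1 ≤ j - 1 by omega)))

end fillCurve

theorem gamma_monotone_lipschitz_continuous_general (I : ℕ)
    (b θ : Fin I → ℝ) (hb : ∀ i, 0 < b i) (hθ : ∀ i, 0 < θ i)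
    (γ : ℝ → Fin I → ℝ)
    (hγ : ∀ w : ℝ, 0 ≤ w → w < ∑ k, θ k * b k →
      ∀ j : ℕ, 1 ≤ j → j ≤ I → bhat b θ j ≤ w → w < bhat b θ (j - 1) →
        γ w = fun i : Fin I =>
          if j ≤ i.val then b i
          else if i.val = j - 1 then (w - bhat b θ j) / θ i else 0)
    (hγtop : γ (∑ k, θ k * b k) = b) :
    (∀ w ∈ Set.Icc (0:ℝ) (∑ k, θ k * b k),
      (∀ i, 0 ≤ γ w i ∧ γ w i ≤ b i) ∧ (∑ i, θ i * γ w i = w)) ∧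
    (∀ i : Fin I, MonotoneOn (fun w => γ w i) (Set.Icc (0:ℝ) (∑ k, θ k * b k))) ∧
    (∀ i : Fin I, ∀ u ∈ Set.Icc (0:ℝ) (∑ k, θ k * b k),
      ∀ v ∈ Set.Icc (0:ℝ) (∑ k, θ k * b k),
        |γ u i - γ v i| ≤ (1 / θ i) * |u - v|) ∧
    ContinuousOn γ (Set.Icc (0:ℝ) (∑ k, θ k * b k)) := by
  have hb₀ : ∀ i, 0 ≤ b i := fun i => (hb i).le
  have hγ_eq : Set.EqOn γ (fillCurve b θ) (Set.Icc 0 (∑ k, θ k * b k)) := by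
    rintro w ⟨hw₀, hw⟩
    rcases hw.lt_or_eq with hw | rfl
    · obtain ⟨j, hj, hjI, hjw, hwj⟩ := exists_bhat_le_lt_bhat_pred hw₀ hw
      rw [hγ w hw₀ hw j hj hjI hjw hwj, fillCurve_eq_ite hb₀ hθ hj hjw hwj]
    · rw [hγtop, fillCurve_sum_theta_mul hb₀ hθ]
  refine ⟨fun w hw => ?_, fun i u hu v hv huv => ?_, fun i u hu v hv => ?_,
    continuous_fillCurve.continuousOn.congr hγ_eq⟩
  · rw [hγ_eq hw]
    exact ⟨fun i => fillCurve_apply_mem_Icc (hb₀ i), sum_theta_mul_fillCurve hb₀ hθ hw⟩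
  · simpa only [hγ_eq hu, hγ_eq hv] using monotone_fillCurve_apply (hθ i) huv
  · rw [hγ_eq hu, hγ_eq hv]
    exact abs_fillCurve_apply_sub_le (hθ i) u v

/-- For every `w ∈ [0,θ·b]`, `γ(w)` is feasible (`0 ≤ γ(w)_i ≤ b_i`, `θ·γ(w) = w`);
each coordinate `w ↦ γ(w)_i` is nondecreasing and Lipschitz with constant `1/θ_i`
on `[0,θ·b]`; in particular `γ` is continuous on `[0,θ·b]`. -/
theorem gamma_monotone_lipschitz_continuous (I : ℕ) (hI : 1 ≤ I)
    (b θ : Fin I → ℝ) (hb : ∀ i, 0 < b i) (hθ : ∀ i, 0 < θ i)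
    (γ : ℝ → Fin I → ℝ)
    (hγ : ∀ w : ℝ, 0 ≤ w → w < ∑ k, θ k * b k →
      ∀ j : ℕ, 1 ≤ j → j ≤ I → bhat b θ j ≤ w → w < bhat b θ (j - 1) →
        γ w = fun i : Fin I =>
          if j ≤ i.val then b i
          else if i.val = j - 1 then (w - bhat b θ j) / θ i else 0)
    (hγtop : γ (∑ k, θ k * b k) = b) :
    (∀ w ∈ Set.Icc (0:ℝ) (∑ k, θ k * b k),
      (∀ i, 0 ≤ γ w i ∧ γ w i ≤ b i) ∧ (∑ i, θ i * γ w i = w)) ∧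
    (∀ i : Fin I, MonotoneOn (fun w => γ w i) (Set.Icc (0:ℝ) (∑ k, θ k * b k))) ∧
    (∀ i : Fin I, ∀ u ∈ Set.Icc (0:ℝ) (∑ k, θ k * b k),
      ∀ v ∈ Set.Icc (0:ℝ) (∑ k, θ k * b k),
        |γ u i - γ v i| ≤ (1 / θ i) * |u - v|) ∧
    ContinuousOn γ (Set.Icc (0:ℝ) (∑ k, θ k * b k)) :=
  gamma_monotone_lipschitz_continuous_general I b θ hb hθ γ hγ hγtop
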